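/- There exists N* ∈ ℕ such that for all n ≥ N*, diam_Δ(W) ≤ diam_n(V_n) + δ, where diam_Δ denotes diameter with respect to d_Δ and diam_n denotes diameter with respect to d_n. -/

import Mathlib

noncomputable section

instance : Fact ((0 : ℝ) < 1) := ⟨one_pos⟩

/-- The closed dyadic arc of level `n` and index `j` in the circle `𝕊 = [0,1]/{0,1}`,
realized as `AddCircle (1 : ℝ)`: the image of `[j/2^n, (j+1)/2^n]`. -/
def dyadicArc (n j : ℕ) : Set (AddCircle (1 : ℝ)) :=
  (fun r : ℝ => (r : AddCircle (1 : ℝ))) '' Set.Icc ((j : ℝ) / 2 ^ n) (((j : ℝ) + 1) / 2 ^ n)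

/-- The left endpoint of the dyadic arc of level `n` and index `j`. -/
def leftPt (n j : ℕ) : AddCircle (1 : ℝ) := (((j : ℝ) / 2 ^ n : ℝ) : AddCircle (1 : ℝ))

/-- The right endpoint of the dyadic arc of level `n` and index `j`. -/
def rightPt (n j : ℕ) : AddCircle (1 : ℝ) := ((((j : ℝ) + 1) / 2 ^ n : ℝ) : AddCircle (1 : ℝ))

/-- `Δ` (given as a function of the level `n` and the index `j < 2^n` of a dyadic arc) is a
dyadic diameter function of type `𝒮₁`: `Δ(𝕊) = 1`, `Δ` is positive, the two children of any
dyadic arc have equal `Δ`-value, which is either half of or equal to that of their parent,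
and `max {Δ(I) : I ∈ ℐ_n} → 0` as `n → ∞`. -/
def IsS1 (Δ : ℕ → ℕ → ℝ) : Prop :=
  Δ 0 0 = 1 ∧
  (∀ n j : ℕ, j < 2 ^ n → 0 < Δ n j) ∧
  (∀ n j : ℕ, j < 2 ^ n → Δ (n + 1) (2 * j) = Δ (n + 1) (2 * j + 1) ∧
    (Δ (n + 1) (2 * j) = Δ n j / 2 ∨ Δ (n + 1) (2 * j) = Δ n j)) ∧
  (∀ ε : ℝ, 0 < ε → ∃ N : ℕ, ∀ n ≥ N, ∀ j < 2 ^ n, Δ n j < ε)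

/-- `c` is a chain of dyadic arcs (given by level-index pairs) joining `x` to `y`:
all indices are valid, the union of the arcs is connected, and it contains `x` and `y`. -/
def IsDyadicChain (N : ℕ) (c : Fin (N + 1) → ℕ × ℕ) (x y : AddCircle (1 : ℝ)) : Prop :=
  (∀ k, (c k).2 < 2 ^ (c k).1) ∧
  IsConnected (⋃ k, dyadicArc (c k).1 (c k).2) ∧
  x ∈ ⋃ k, dyadicArc (c k).1 (c k).2 ∧ y ∈ ⋃ k, dyadicArc (c k).1 (c k).2

/-- The set of sums `Σ Δ'(J_k)` over all chains of dyadic arcs joining `x` and `y`. -/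
def chainSums (Δ' : ℕ → ℕ → ℝ) (x y : AddCircle (1 : ℝ)) : Set ℝ :=
  {s | ∃ (N : ℕ) (c : Fin (N + 1) → ℕ × ℕ), IsDyadicChain N c x y ∧
    s = ∑ k, Δ' (c k).1 (c k).2}

/-- The distance associated to a weight `Δ'` on dyadic arcs:
`d(x,y) = inf Σ Δ'(J_k)` over all chains of dyadic arcs joining `x` and `y`. -/
def dOf (Δ' : ℕ → ℕ → ℝ) (x y : AddCircle (1 : ℝ)) : ℝ := sInf (chainSums Δ' x y)

/-- The truncation `Δ_n` of `Δ`: `Δ_n(I) = Δ(I)` for arcs of level `≤ n`, and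
`Δ_n(I) = ½ Δ_n(parent of I)` for arcs of level `> n`. -/
def trunc (Δ : ℕ → ℕ → ℝ) (n : ℕ) : ℕ → ℕ → ℝ := fun m j =>
  if m ≤ n then Δ m j else Δ n (j / 2 ^ (m - n)) / 2 ^ (m - n)

/-- A chain of dyadic arcs is minimal if the arcs have pairwise disjoint interiors and no
union of at least two distinct arcs from the chain equals a dyadic arc. -/
def IsMinimalChain (N : ℕ) (c : Fin (N + 1) → ℕ × ℕ) : Prop :=
  (∀ k l : Fin (N + 1), k ≠ l →
    interior (dyadicArc (c k).1 (c k).2) ∩ interior (dyadicArc (c l).1 (c l).2) = ∅) ∧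
  (∀ T : Finset (Fin (N + 1)), 2 ≤ T.card →
    ¬∃ m j : ℕ, j < 2 ^ m ∧ (⋃ k ∈ T, dyadicArc (c k).1 (c k).2) = dyadicArc m j)

/-- The piecewise-linear folding of `[0,1]`: it maps `[0,1/4]` onto `[0,1/2]`,
`[1/4,3/8]` onto `[1/2,3/4]`, `[3/8,1/2]` onto `[1/2,3/4]` reversing orientation,
`[1/2,5/8]` onto `[1/4,1/2]` reversing orientation, `[5/8,3/4]` onto `[1/4,1/2]`,
and `[3/4,1]` onto `[1/2,1]`, each piece linearly. -/
def foldPhi (t : ℝ) : ℝ :=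
  if t ≤ 3 / 8 then 2 * t else if t ≤ 5 / 8 then 3 / 2 - 2 * t else 2 * t - 1

/-- The canonical representative in `[0,1)` of a point of the circle. -/
def circRep (x : AddCircle (1 : ℝ)) : ℝ := ((AddCircle.equivIco 1 0) x).1

/-- The map `f_n : 𝕊 → 𝕊`: on each dyadic arc `I` of level `n`, it is the identity if the
children of `I` have `Δ`-value half that of `I`, and the folding map of `I` if the children
have `Δ`-value equal to that of `I`. -/
def foldMap (Δ : ℕ → ℕ → ℝ) (n : ℕ) (x : AddCircle (1 : ℝ)) : AddCircle (1 : ℝ) :=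
  let t : ℝ := circRep x
  let j : ℕ := ⌊t * 2 ^ n⌋₊
  if Δ (n + 1) (2 * j) = Δ n j then
    (((((j : ℝ) + foldPhi (t * 2 ^ n - (j : ℝ))) / 2 ^ n) : ℝ) : AddCircle (1 : ℝ))
  else x

/-- The composition `F_{m,n} = f_m ∘ f_{m+1} ∘ ⋯ ∘ f_n` (the identity if `n < m`). -/
def Fchain (Δ : ℕ → ℕ → ℝ) (m : ℕ) : ℕ → AddCircle (1 : ℝ) → AddCircle (1 : ℝ)
  | 0 => if m = 0 then foldMap Δ 0 else id
  | n + 1 => if m ≤ n then Fchain Δ m n ∘ foldMap Δ (n + 1)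
      else if m = n + 1 then foldMap Δ (n + 1) else id

/-- The set `𝒟_k` of dyadic points of level `k` in the circle. -/
def Dpts (k : ℕ) : Set (AddCircle (1 : ℝ)) :=
  {x | ∃ j : ℕ, x = (((j : ℝ) / 2 ^ k : ℝ) : AddCircle (1 : ℝ))}

/-- The set `𝒟 = ⋃ k, 𝒟_k` of all dyadic points of the circle. -/
def DptsAll : Set (AddCircle (1 : ℝ)) := ⋃ k, Dpts k

/-- `F` is the map `F_m : Γ → Γ_m`: it is `1`-Lipschitz from `d_Δ` to `d_m` and agrees on
dyadic points with the (eventually stable) limit of the maps `F_{m,n}` as `n → ∞`. -/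
def IsLimitMap (Δ : ℕ → ℕ → ℝ) (m : ℕ) (F : AddCircle (1 : ℝ) → AddCircle (1 : ℝ)) : Prop :=
  (∀ x y : AddCircle (1 : ℝ), dOf (trunc Δ m) (F x) (F y) ≤ dOf Δ x y) ∧
  (∀ x ∈ DptsAll, ∃ N : ℕ, ∀ n ≥ N, Fchain Δ m n x = F x)

/-- A subset `U` of a space with a distance function `d` is `δ`-connected if every pair of
points of `U` is joined by a finite sequence of points of `U` with consecutive
distances at most `δ`. -/
def DConn {α : Type*} (d : α → α → ℝ) (δ : ℝ) (U : Set α) : Prop :=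
  ∀ x ∈ U, ∀ y ∈ U, ∃ (N : ℕ) (c : Fin (N + 1) → α),
    (∀ i, c i ∈ U) ∧ c 0 = x ∧ c (Fin.last N) = y ∧
      ∀ i : Fin N, d (c i.castSucc) (c i.succ) ≤ δ

/-- `U` is a `δ`-component of `S`: a maximal `δ`-connected subset of `S`. -/
def DComp {α : Type*} (d : α → α → ℝ) (δ : ℝ) (S U : Set α) : Prop :=
  U ⊆ S ∧ DConn d δ U ∧ ∀ V : Set α, U ⊆ V → V ⊆ S → DConn d δ V → V = U

/-- The diameter of a set with respect to a distance function `d`. -/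
def ddiam {α : Type*} (d : α → α → ℝ) (S : Set α) : ℝ :=
  sSup {r | ∃ x ∈ S, ∃ y ∈ S, r = d x y}


/-!
For `n` large every level-`n` arc has `Δ`-value at most `β = δ/13`, and `F_n` maps `W` into
`V_n`; it suffices to show `d_Δ(x, y) ≤ d_n(F_n x, F_n y) + 13β`.

First, `F_n` moves every point by at most `3β` for `d_n`: it keeps dyadic points in their
level-`n` arc and is `1`-Lipschitz from `d_Δ` to `d_n`.

Second, `d_Δ ≤ d_n + 7β`. In a chain for `d_n`, replace each arc finer than level `n` by its
level-`n` ancestor, unless a coarse arc of the chain already covers that ancestor. An ancestor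
costs at most the `d_n`-weights of the arcs below it, except when these are too short to cover
it; then it contains a point off the union of the chain. That union is connected, and cutting
the circle open at one such point shows that at most seven ancestors are of this kind.
-/

open Set

def dyadicIcc (n j : ℕ) : Set ℝ := Icc ((j : ℝ) / 2 ^ n) (((j : ℝ) + 1) / 2 ^ n)

def dyadicIoo (n j : ℕ) : Set ℝ := Ioo ((j : ℝ) / 2 ^ n) (((j : ℝ) + 1) / 2 ^ n)

def dyadicIndex (n : ℕ) (x : AddCircle (1 : ℝ)) : ℕ := ⌊circRep x * 2 ^ n⌋₊

def dyadicRats : Set ℝ := range fun p : ℕ × ℕ => (p.2 : ℝ) / 2 ^ p.1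

lemma dyadicIcc_subset_Icc {n j : ℕ} (h : j < 2 ^ n) : dyadicIcc n j ⊆ Icc 0 1 := by
  have hj : (j : ℝ) + 1 ≤ 2 ^ n := by exact_mod_cast h
  exact Icc_subset_Icc (by positivity) ((div_le_one (by positivity)).2 hj)

lemma dyadicIcc_subset_ancestor {m n : ℕ} (h : m ≤ n) (j : ℕ) :
    dyadicIcc n j ⊆ dyadicIcc m (j / 2 ^ (n - m)) := by
  set q := j / 2 ^ (n - m)
  have hpow : (2 : ℝ) ^ n = 2 ^ m * 2 ^ (n - m) := by rw [← pow_add, Nat.add_sub_cancel' h]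
  have hlo : ((q * 2 ^ (n - m) : ℕ) : ℝ) ≤ j := by exact_mod_cast Nat.div_mul_le_self j _
  have hhi : ((j + 1 : ℕ) : ℝ) ≤ ((q + 1) * 2 ^ (n - m) : ℕ) := by
    exact_mod_cast Nat.lt_mul_of_div_lt (Nat.lt_succ_self q) (by positivity)
  push_cast at hlo hhi
  have hm : (0 : ℝ) < 2 ^ m := by positivity
  apply Icc_subset_Icc
  · rw [div_le_div_iff₀ hm (by positivity), hpow]; nlinarith
  · rw [div_le_div_iff₀ (by positivity) hm, hpow]; nlinarith

lemma floor_mul_two_pow_eq {n j : ℕ} {z : ℝ}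
    (h : z ∈ Ico ((j : ℝ) / 2 ^ n) (((j : ℝ) + 1) / 2 ^ n)) : ⌊z * 2 ^ n⌋₊ = j := by
  have hn : (0 : ℝ) < 2 ^ n := by positivity
  have h₁ : (j : ℝ) ≤ z * 2 ^ n := (div_le_iff₀ hn).1 h.1
  rw [Nat.floor_eq_iff (le_trans (Nat.cast_nonneg j) h₁)]
  exact ⟨h₁, (lt_div_iff₀ hn).1 h.2⟩

lemma eq_of_mem_dyadicIoo {n j₁ j₂ : ℕ} {z : ℝ} (h₁ : z ∈ dyadicIoo n j₁)
    (h₂ : z ∈ dyadicIoo n j₂) : j₁ = j₂ :=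
  (floor_mul_two_pow_eq (Ioo_subset_Ico_self h₁)).symm.trans
    (floor_mul_two_pow_eq (Ioo_subset_Ico_self h₂))

lemma mem_dyadicIoo_of_not_mem_dyadicRats {n j : ℕ} {z : ℝ} (hz : z ∈ dyadicIcc n j)
    (hd : z ∉ dyadicRats) : z ∈ dyadicIoo n j := by
  refine ⟨hz.1.lt_of_ne ?_, hz.2.lt_of_ne ?_⟩ <;> rintro rfl <;> apply hd
  · exact ⟨(n, j), rfl⟩
  · exact ⟨(n, j + 1), by push_cast; rfl⟩

lemma dyadicRats_countable : dyadicRats.Countable := countable_range _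

lemma circRep_mem (x : AddCircle (1 : ℝ)) : circRep x ∈ Ico (0 : ℝ) 1 := by
  simpa only [circRep, zero_add] using ((AddCircle.equivIco 1 0) x).2

lemma coe_circRep (x : AddCircle (1 : ℝ)) : ((circRep x : ℝ) : AddCircle (1 : ℝ)) = x :=
  (AddCircle.equivIco (1 : ℝ) 0).symm_apply_apply x

lemma circRep_coe {r : ℝ} (h : r ∈ Ico (0 : ℝ) 1) : circRep (r : AddCircle (1 : ℝ)) = r := by
  rw [circRep, AddCircle.coe_equivIco_mk_apply, div_one, Int.fract_eq_self.2 h, mul_one]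

lemma coe_injOn_Ico : InjOn ((↑) : ℝ → AddCircle (1 : ℝ)) (Ico 0 1) := fun r hr s hs h =>
  (AddCircle.coe_eq_coe_iff_of_mem_Ico (a := 0) (by simpa using hr) (by simpa using hs)).1 h

lemma eq_of_coe_eq_coe {r s : ℝ} (hr : r ∈ Icc (0 : ℝ) 1) (hs : s ∈ Ioo (0 : ℝ) 1)
    (h : (r : AddCircle (1 : ℝ)) = s) : r = s := by
  rcases hr.2.lt_or_eq with hr1 | rfl
  · exact coe_injOn_Ico ⟨hr.1, hr1⟩ (Ioo_subset_Ico_self hs) h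
  · have : ((0 : ℝ) : AddCircle (1 : ℝ)) = s := by
      rw [← h, AddCircle.coe_period, AddCircle.coe_zero]
    exact absurd (coe_injOn_Ico ⟨le_rfl, one_pos⟩ (Ioo_subset_Ico_self hs) this) hs.1.ne

lemma coe_mem_dyadicArc_iff {z : ℝ} (hz : z ∈ Ioo (0 : ℝ) 1) {n j : ℕ} (hj : j < 2 ^ n) :
    (z : AddCircle (1 : ℝ)) ∈ dyadicArc n j ↔ z ∈ dyadicIcc n j := by
  refine ⟨?_, fun h => ⟨z, h, rfl⟩⟩
  rintro ⟨r, hr, hrz⟩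
  rwa [← eq_of_coe_eq_coe (dyadicIcc_subset_Icc hj hr) hz hrz]

lemma mem_Ioo_of_mem_dyadicIoo {n j : ℕ} (hj : j < 2 ^ n) {z : ℝ} (hz : z ∈ dyadicIoo n j) :
    z ∈ Ioo (0 : ℝ) 1 :=
  ⟨(div_nonneg (Nat.cast_nonneg j) (by positivity)).trans_lt hz.1,
    hz.2.trans_le (dyadicIcc_subset_Icc hj ⟨by gcongr; linarith, le_rfl⟩).2⟩

lemma coe_not_mem_dyadicArc {n j j' : ℕ} (hj : j < 2 ^ n) (hj' : j' < 2 ^ n) (hne : j' ≠ j)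
    {z : ℝ} (hz : z ∈ dyadicIoo n j) (hd : z ∉ dyadicRats) :
    (z : AddCircle (1 : ℝ)) ∉ dyadicArc n j' := fun h =>
  hne (eq_of_mem_dyadicIoo (mem_dyadicIoo_of_not_mem_dyadicRats
    ((coe_mem_dyadicArc_iff (mem_Ioo_of_mem_dyadicIoo hj hz) hj').1 h) hd) hz)

lemma dyadicIndex_lt (n : ℕ) (x : AddCircle (1 : ℝ)) : dyadicIndex n x < 2 ^ n := by
  obtain ⟨h₀, h₁⟩ := circRep_mem x
  have hn : (0 : ℝ) < 2 ^ n := by positivity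
  rw [dyadicIndex, Nat.floor_lt (by positivity)]
  push_cast
  nlinarith

lemma circRep_mem_Ico_dyadicIndex (n : ℕ) (x : AddCircle (1 : ℝ)) :
    circRep x ∈ Ico ((dyadicIndex n x : ℝ) / 2 ^ n) (((dyadicIndex n x : ℝ) + 1) / 2 ^ n) := by
  have hn : (0 : ℝ) < 2 ^ n := by positivity
  have h0 : 0 ≤ circRep x * 2 ^ n := mul_nonneg (circRep_mem x).1 hn.le
  exact ⟨(div_le_iff₀ hn).2 (Nat.floor_le h0), (lt_div_iff₀ hn).2 (Nat.lt_floor_add_one _)⟩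

lemma dyadicIndex_eq_of_circRep_mem {n j : ℕ} {x : AddCircle (1 : ℝ)}
    (h : circRep x ∈ Ico ((j : ℝ) / 2 ^ n) (((j : ℝ) + 1) / 2 ^ n)) : dyadicIndex n x = j :=
  floor_mul_two_pow_eq h

lemma mem_dyadicArc_dyadicIndex (n : ℕ) (x : AddCircle (1 : ℝ)) :
    x ∈ dyadicArc n (dyadicIndex n x) :=
  ⟨circRep x, Ico_subset_Icc_self (circRep_mem_Ico_dyadicIndex n x), coe_circRep x⟩

lemma dyadicIndex_eq_div {m n : ℕ} (h : m ≤ n) (x : AddCircle (1 : ℝ)) :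
    dyadicIndex m x = dyadicIndex n x / 2 ^ (n - m) := by
  have hpow : (2 : ℝ) ^ m = 2 ^ n / 2 ^ (n - m) := by
    rw [eq_div_iff (by positivity), ← pow_add, Nat.add_sub_cancel' h]
  rw [dyadicIndex, dyadicIndex, hpow, ← mul_div_assoc, ← Nat.floor_div_natCast]
  push_cast; rfl

/-- The alternative `j = 2^n - 1` comes from the identification `0 = 1`. -/
lemma eq_of_mem_dyadicArc {n j : ℕ} (hj : j < 2 ^ n) {w : AddCircle (1 : ℝ)}
    (hw : w ∈ dyadicArc n j) :
    j = dyadicIndex n w ∨ j + 1 = dyadicIndex n w ∨ j = 2 ^ n - 1 := by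
  obtain ⟨r, hr, rfl⟩ := hw
  have hn : (0 : ℝ) < 2 ^ n := by positivity
  rcases (dyadicIcc_subset_Icc hj hr).2.lt_or_eq with hr1 | rfl
  · have hr0 : r ∈ Ico (0 : ℝ) 1 := ⟨(dyadicIcc_subset_Icc hj hr).1, hr1⟩
    rw [dyadicIndex, circRep_coe hr0]
    have h₁ : (j : ℝ) ≤ r * 2 ^ n := (div_le_iff₀ hn).1 hr.1
    have h₂ : r * 2 ^ n ≤ ((j + 1 : ℕ) : ℝ) := by push_cast; exact (le_div_iff₀ hn).1 hr.2
    have := Nat.le_floor h₁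
    have := (Nat.floor_le_floor h₂).trans_eq (Nat.floor_natCast _)
    omega
  · have : (2 : ℝ) ^ n ≤ j + 1 := by simpa [le_div_iff₀ hn] using hr.2
    have : 2 ^ n ≤ j + 1 := by exact_mod_cast this
    omega

lemma isConnected_dyadicArc (n j : ℕ) : IsConnected (dyadicArc n j) :=
  (isConnected_Icc (div_le_div_of_nonneg_right (by linarith) (by positivity))).image _
    (AddCircle.continuous_mk' 1).continuousOn

lemma dyadicArc_subset_ancestor {m n : ℕ} (h : m ≤ n) (j : ℕ) :
    dyadicArc n j ⊆ dyadicArc m (j / 2 ^ (n - m)) :=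
  image_mono (dyadicIcc_subset_ancestor h j)

lemma mem_dyadicArc_zero_zero (x : AddCircle (1 : ℝ)) : x ∈ dyadicArc 0 0 := by
  simpa [dyadicIndex, Nat.floor_eq_zero.2 (circRep_mem x).2] using mem_dyadicArc_dyadicIndex 0 x

section ChainDistance

variable {Δ' : ℕ → ℕ → ℝ}

lemma sum_mem_chainSums {ι : Type*} [Fintype ι] (c : ι → ℕ × ℕ) (hc : ∀ i, (c i).2 < 2 ^ (c i).1)
    {x y : AddCircle (1 : ℝ)} (hconn : IsConnected (⋃ i, dyadicArc (c i).1 (c i).2))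
    (hx : x ∈ ⋃ i, dyadicArc (c i).1 (c i).2) (hy : y ∈ ⋃ i, dyadicArc (c i).1 (c i).2) :
    ∑ i, Δ' (c i).1 (c i).2 ∈ chainSums Δ' x y := by
  obtain ⟨i₀, -⟩ := mem_iUnion.1 hx
  obtain ⟨N, hN⟩ : ∃ N, Fintype.card ι = N + 1 :=
    Nat.exists_eq_add_one.2 (Fintype.card_pos_iff.2 ⟨i₀⟩)
  set e : Fin (N + 1) ≃ ι := (finCongr hN.symm).trans (Fintype.equivFin ι).symm
  have hU : (⋃ k, dyadicArc (c (e k)).1 (c (e k)).2) = ⋃ i, dyadicArc (c i).1 (c i).2 :=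
    e.surjective.iUnion_comp fun i => dyadicArc (c i).1 (c i).2
  refine ⟨N, c ∘ e, ⟨fun k => hc (e k), ?_, ?_, ?_⟩, ?_⟩
  · exact hU ▸ hconn
  · exact hU ▸ hx
  · exact hU ▸ hy
  · exact (e.sum_comp fun i => Δ' (c i).1 (c i).2).symm

lemma chainSums_nonempty (x y : AddCircle (1 : ℝ)) :
    (chainSums Δ' x y).Nonempty := by
  refine ⟨_, sum_mem_chainSums (fun _ : Unit => (0, 0)) (by simp) ?_ ?_ ?_⟩ <;>
    simp [iUnion_const, isConnected_dyadicArc, mem_dyadicArc_zero_zero]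

lemma dOf_comm (x y : AddCircle (1 : ℝ)) : dOf Δ' x y = dOf Δ' y x := by
  have h : ∀ x y, chainSums Δ' x y ⊆ chainSums Δ' y x := by
    rintro x y s ⟨N, c, ⟨hv, hc, hx, hy⟩, rfl⟩
    exact ⟨N, c, ⟨hv, hc, hy, hx⟩, rfl⟩
  rw [dOf, dOf, (h x y).antisymm (h y x)]

variable (hΔ' : ∀ m j, j < 2 ^ m → 0 ≤ Δ' m j)
include hΔ'

lemma nonneg_of_mem_chainSums {x y : AddCircle (1 : ℝ)} {s : ℝ} (hs : s ∈ chainSums Δ' x y) :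
    0 ≤ s := by
  obtain ⟨N, c, hc, rfl⟩ := hs
  exact Finset.sum_nonneg fun k _ => hΔ' _ _ (hc.1 k)

lemma dOf_nonneg (x y : AddCircle (1 : ℝ)) : 0 ≤ dOf Δ' x y :=
  le_csInf (chainSums_nonempty x y) fun _ => nonneg_of_mem_chainSums hΔ'

lemma dOf_le_of_mem_chainSums {x y : AddCircle (1 : ℝ)} {s : ℝ} (hs : s ∈ chainSums Δ' x y) :
    dOf Δ' x y ≤ s :=
  csInf_le ⟨0, fun _ => nonneg_of_mem_chainSums hΔ'⟩ hs

lemma dOf_le_sum {ι : Type*} [Fintype ι] (c : ι → ℕ × ℕ) (hc : ∀ i, (c i).2 < 2 ^ (c i).1)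
    {x y : AddCircle (1 : ℝ)} (hconn : IsConnected (⋃ i, dyadicArc (c i).1 (c i).2))
    (hx : x ∈ ⋃ i, dyadicArc (c i).1 (c i).2) (hy : y ∈ ⋃ i, dyadicArc (c i).1 (c i).2) :
    dOf Δ' x y ≤ ∑ i, Δ' (c i).1 (c i).2 :=
  dOf_le_of_mem_chainSums hΔ' (sum_mem_chainSums c hc hconn hx hy)

lemma dOf_le_of_mem_dyadicArc {m j : ℕ} (hj : j < 2 ^ m) {x y : AddCircle (1 : ℝ)}
    (hx : x ∈ dyadicArc m j) (hy : y ∈ dyadicArc m j) : dOf Δ' x y ≤ Δ' m j := by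
  simpa using dOf_le_sum hΔ' (fun _ : Unit => (m, j)) (fun _ => hj)
    (by simpa [iUnion_const] using isConnected_dyadicArc m j) (by simpa using hx) (by simpa using hy)

lemma dOf_le_weight_zero_zero (x y : AddCircle (1 : ℝ)) : dOf Δ' x y ≤ Δ' 0 0 :=
  dOf_le_of_mem_dyadicArc hΔ' (by norm_num) (mem_dyadicArc_zero_zero x)
    (mem_dyadicArc_zero_zero y)

lemma dOf_triangle (x y z : AddCircle (1 : ℝ)) :
    dOf Δ' x z ≤ dOf Δ' x y + dOf Δ' y z := by
  suffices h : ∀ s ∈ chainSums Δ' x y, ∀ t ∈ chainSums Δ' y z, dOf Δ' x z ≤ s + t by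
    rw [← sub_le_iff_le_add]
    refine le_csInf (chainSums_nonempty x y) fun s hs => ?_
    rw [sub_le_comm]
    exact le_csInf (chainSums_nonempty y z) fun t ht => sub_le_iff_le_add'.2 (h s hs t ht)
  rintro _ ⟨N₁, c₁, hc₁, rfl⟩ _ ⟨N₂, c₂, hc₂, rfl⟩
  have hU : (⋃ i, dyadicArc (Sum.elim c₁ c₂ i).1 (Sum.elim c₁ c₂ i).2) =
      (⋃ k, dyadicArc (c₁ k).1 (c₁ k).2) ∪ ⋃ k, dyadicArc (c₂ k).1 (c₂ k).2 :=
    iUnion_sum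
  have h := dOf_le_sum hΔ' (Sum.elim c₁ c₂) (Sum.forall.2 ⟨hc₁.1, hc₂.1⟩)
    (hU ▸ hc₁.2.1.union ⟨y, hc₁.2.2.2, hc₂.2.2.1⟩ hc₂.2.1)
    (hU ▸ mem_union_left _ hc₁.2.2.1) (hU ▸ mem_union_right _ hc₂.2.2.2)
  simpa [Fintype.sum_sum_type] using h

end ChainDistance

section Truncation

variable {Δ : ℕ → ℕ → ℝ}

lemma trunc_of_le {n m : ℕ} (h : m ≤ n) (j : ℕ) : trunc Δ n m j = Δ m j := if_pos h

lemma trunc_of_lt {n m : ℕ} (h : n < m) (j : ℕ) :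
    trunc Δ n m j = Δ n (j / 2 ^ (m - n)) / 2 ^ (m - n) := if_neg h.not_ge

lemma ancestor_lt {m n j : ℕ} (h : m ≤ n) (hj : j < 2 ^ n) : j / 2 ^ (n - m) < 2 ^ m :=
  Nat.div_lt_of_lt_mul (by rwa [← pow_add, Nat.sub_add_cancel h])

lemma IsS1.nonneg (hΔ : IsS1 Δ) {m j : ℕ} (hj : j < 2 ^ m) : 0 ≤ Δ m j := (hΔ.2.1 m j hj).le

lemma IsS1.trunc_nonneg (hΔ : IsS1 Δ) (n : ℕ) {m j : ℕ} (hj : j < 2 ^ m) :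
    0 ≤ trunc Δ n m j := by
  rcases le_or_gt m n with h | h
  · rw [trunc_of_le h]; exact hΔ.nonneg hj
  · rw [trunc_of_lt h]; exact div_nonneg (hΔ.nonneg (ancestor_lt h.le hj)) (by positivity)

end Truncation

lemma foldPhi_mem_Ico {s : ℝ} (h : s ∈ Ico (0 : ℝ) 1) : foldPhi s ∈ Ico (0 : ℝ) 1 := by
  obtain ⟨h₀, h₁⟩ := h
  unfold foldPhi
  split_ifs <;> constructor <;> linarith

lemma dyadicIndex_foldMap (Δ : ℕ → ℕ → ℝ) (k : ℕ) (x : AddCircle (1 : ℝ)) :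
    dyadicIndex k (foldMap Δ k x) = dyadicIndex k x := by
  have hx : circRep x ∈ Ico ((⌊circRep x * 2 ^ k⌋₊ : ℝ) / 2 ^ k)
      (((⌊circRep x * 2 ^ k⌋₊ : ℝ) + 1) / 2 ^ k) := circRep_mem_Ico_dyadicIndex k x
  have hj : ((⌊circRep x * 2 ^ k⌋₊ : ℕ) : ℝ) + 1 ≤ 2 ^ k := by
    have h : ((dyadicIndex k x : ℕ) : ℝ) + 1 ≤ 2 ^ k := by exact_mod_cast dyadicIndex_lt k x
    exact h
  rw [foldMap]
  set j := ⌊circRep x * 2 ^ k⌋₊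
  split_ifs
  · have hk : (0 : ℝ) < 2 ^ k := by positivity
    have hφ := foldPhi_mem_Ico (s := circRep x * 2 ^ k - j)
      ⟨by linarith [(div_le_iff₀ hk).1 hx.1], by linarith [(lt_div_iff₀ hk).1 hx.2]⟩
    have hmem : ((j : ℝ) + foldPhi (circRep x * 2 ^ k - j)) / 2 ^ k ∈
        Ico ((j : ℝ) / 2 ^ k) (((j : ℝ) + 1) / 2 ^ k) :=
      ⟨by gcongr; linarith [hφ.1], by gcongr; linarith [hφ.2]⟩
    apply dyadicIndex_eq_of_circRep_mem
    rwa [circRep_coe ⟨(div_nonneg (Nat.cast_nonneg j) hk.le).trans hmem.1,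
      hmem.2.trans_le ((div_le_one hk).2 hj)⟩]
  · rfl

lemma dyadicIndex_foldMap_of_le (Δ : ℕ → ℕ → ℝ) {m k : ℕ} (h : m ≤ k) (x : AddCircle (1 : ℝ)) :
    dyadicIndex m (foldMap Δ k x) = dyadicIndex m x := by
  rw [dyadicIndex_eq_div h, dyadicIndex_eq_div h x, dyadicIndex_foldMap]

lemma dyadicIndex_Fchain (Δ : ℕ → ℕ → ℝ) {m n : ℕ} (h : m ≤ n) (x : AddCircle (1 : ℝ)) :
    dyadicIndex m (Fchain Δ m n x) = dyadicIndex m x := by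
  induction n generalizing x with
  | zero =>
    obtain rfl := Nat.le_zero.1 h
    simp only [Fchain, if_true]
    exact dyadicIndex_foldMap Δ 0 x
  | succ n ih =>
    rcases h.lt_or_eq with h | rfl
    · simp only [Fchain, if_pos (Nat.lt_succ_iff.1 h), Function.comp_apply]
      rw [ih (Nat.lt_succ_iff.1 h), dyadicIndex_foldMap_of_le Δ h.le]
    · simp only [Fchain, Nat.not_succ_le_self, if_false, if_true]
      exact dyadicIndex_foldMap Δ _ x

lemma IsLimitMap.mem_dyadicArc {Δ : ℕ → ℕ → ℝ} {n : ℕ} {Fn : AddCircle (1 : ℝ) → AddCircle (1 : ℝ)}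
    (hF : IsLimitMap Δ n Fn) {x : AddCircle (1 : ℝ)} (hx : x ∈ DptsAll) :
    Fn x ∈ dyadicArc n (dyadicIndex n x) := by
  obtain ⟨N, hN⟩ := hF.2 x hx
  rw [← hN (max N n) (le_max_left N n), ← dyadicIndex_Fchain Δ (le_max_right N n)]
  exact mem_dyadicArc_dyadicIndex n _

lemma IsLimitMap.dOf_trunc_self_le {Δ : ℕ → ℕ → ℝ} (hΔ : IsS1 Δ) {n : ℕ}
    {Fn : AddCircle (1 : ℝ) → AddCircle (1 : ℝ)} (hF : IsLimitMap Δ n Fn) {B : ℝ}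
    (hB : ∀ i < 2 ^ n, Δ n i ≤ B) (x : AddCircle (1 : ℝ)) :
    dOf (trunc Δ n) x (Fn x) ≤ 3 * B := by
  set j := dyadicIndex n x
  have hj := dyadicIndex_lt n x
  have hnn : ∀ m i, i < 2 ^ m → 0 ≤ trunc Δ n m i := fun _ _ => hΔ.trunc_nonneg n
  have hx' : leftPt n j ∈ dyadicArc n j :=
    ⟨_, ⟨le_rfl, div_le_div_of_nonneg_right (by linarith) (by positivity)⟩, rfl⟩
  have hx'D : leftPt n j ∈ DptsAll := mem_iUnion.2 ⟨n, j, rfl⟩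
  have hx'j : dyadicIndex n (leftPt n j) = j := by
    have hn : (0 : ℝ) < 2 ^ n := by positivity
    have hmem : (j : ℝ) / 2 ^ n ∈ Ico ((j : ℝ) / 2 ^ n) (((j : ℝ) + 1) / 2 ^ n) :=
      ⟨le_rfl, by gcongr; linarith⟩
    apply dyadicIndex_eq_of_circRep_mem
    rwa [leftPt, circRep_coe ⟨by positivity, (div_lt_one hn).2 (by exact_mod_cast hj)⟩]
  have hFx' : Fn (leftPt n j) ∈ dyadicArc n j := by
    simpa only [hx'j] using hF.mem_dyadicArc hx'D
  have hBj : trunc Δ n n j ≤ B := (trunc_of_le le_rfl j).trans_le (hB j hj)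
  calc dOf (trunc Δ n) x (Fn x)
      ≤ dOf (trunc Δ n) x (leftPt n j) + (dOf (trunc Δ n) (leftPt n j) (Fn (leftPt n j)) +
          dOf (trunc Δ n) (Fn (leftPt n j)) (Fn x)) :=
        (dOf_triangle hnn _ _ _).trans (add_le_add_right (dOf_triangle hnn _ _ _) _)
    _ ≤ B + (B + B) := by
        gcongr
        · exact (dOf_le_of_mem_dyadicArc hnn hj (mem_dyadicArc_dyadicIndex n x) hx').trans hBj
        · exact (dOf_le_of_mem_dyadicArc hnn hj hx' hFx').trans hBj
        · exact (hF.1 _ _).trans ((dOf_le_of_mem_dyadicArc (fun _ _ => hΔ.nonneg) hj hx'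
            (mem_dyadicArc_dyadicIndex n x)).trans (hB j hj))
    _ = 3 * B := by ring

open MeasureTheory in
lemma exists_mem_dyadicIoo_forall_not_mem {ι : Type*} (S : Finset ι) (lv idx : ι → ℕ)
    {n : ℕ} (a : ℕ) (hS : ∑ k ∈ S, (1 : ℝ) / 2 ^ lv k < 1 / 2 ^ n) :
    ∃ z ∈ dyadicIoo n a, z ∉ dyadicRats ∧ ∀ k ∈ S, z ∉ dyadicIcc (lv k) (idx k) := by
  have hvol : ∀ m j, volume (dyadicIcc m j) = ENNReal.ofReal (1 / 2 ^ m) := fun m j => by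
    rw [dyadicIcc, Real.volume_Icc]; congr 1; ring
  by_contra! h
  have hsub : dyadicIoo n a ⊆ (⋃ k ∈ S, dyadicIcc (lv k) (idx k)) ∪ dyadicRats := by
    intro z hz
    by_cases hd : z ∈ dyadicRats
    · exact Or.inr hd
    · obtain ⟨k, hk, hzk⟩ := h z hz hd
      exact Or.inl (mem_biUnion hk hzk)
  have : ENNReal.ofReal (1 / 2 ^ n) ≤ ENNReal.ofReal (∑ k ∈ S, (1 : ℝ) / 2 ^ lv k) :=
    calc ENNReal.ofReal (1 / 2 ^ n) = volume (dyadicIoo n a) := by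
          rw [dyadicIoo, Real.volume_Ioo]; congr 1; ring
      _ ≤ volume (⋃ k ∈ S, dyadicIcc (lv k) (idx k)) + volume dyadicRats :=
          (measure_mono hsub).trans (measure_union_le _ _)
      _ ≤ ∑ k ∈ S, volume (dyadicIcc (lv k) (idx k)) := by
          rw [dyadicRats_countable.measure_zero, add_zero]
          exact measure_biUnion_finset_le _ _
      _ = _ := by
          simp only [hvol]
          rw [ENNReal.ofReal_sum_of_nonneg fun k _ => by positivity]
  exact hS.not_ge ((ENNReal.ofReal_le_ofReal_iff (by positivity)).1 this)

lemma Set.OrdConnected.csInf_mem_or_csSup_mem {α : Type*} [ConditionallyCompleteLinearOrder α]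
    {V I : Set α} (hV : V.OrdConnected) (hI : I.OrdConnected) {v w : α} (hvV : v ∈ V)
    (hvI : v ∈ I) (hwI : w ∈ I) (hwV : w ∉ V) : sInf V ∈ I ∨ sSup V ∈ I := by
  rcases lt_or_gt_of_ne (ne_of_mem_of_not_mem hvV hwV).symm with hwv | hvw
  · have hlb : w ∈ lowerBounds V := fun u hu =>
      le_of_not_ge fun huw => hwV (hV.out hu hvV ⟨huw, hwv.le⟩)
    exact Or.inl (hI.out hwI hvI ⟨le_csInf ⟨v, hvV⟩ hlb, csInf_le ⟨w, hlb⟩ hvV⟩)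
  · have hub : w ∈ upperBounds V := fun u hu =>
      le_of_not_ge fun hwu => hwV (hV.out hvV hu ⟨hvw.le, hwu⟩)
    exact Or.inr (hI.out hvI hwI ⟨le_csSup ⟨w, hub⟩ hvV, csSup_le ⟨v, hvV⟩ hub⟩)

lemma card_le_three_of_mem_dyadicArc {n : ℕ} (S : Finset ℕ) (hS : ∀ a ∈ S, a < 2 ^ n)
    {w : AddCircle (1 : ℝ)} (hw : ∀ a ∈ S, w ∈ dyadicArc n a) : S.card ≤ 3 := by
  set i := dyadicIndex n w
  refine (Finset.card_le_card (t := {i, i - 1, 2 ^ n - 1}) fun a ha => ?_).trans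
    Finset.card_le_three
  have := eq_of_mem_dyadicArc (hS a ha) (hw a ha)
  simp only [Finset.mem_insert, Finset.mem_singleton]
  omega

lemma ordConnected_image_equivIoc {z : ℝ} {s : Set (AddCircle (1 : ℝ))}
    (hs : IsPreconnected s) (hz : (z : AddCircle (1 : ℝ)) ∉ s) :
    ((fun w => (AddCircle.equivIoc 1 z w : ℝ)) '' s).OrdConnected :=
  (hs.image _ fun _ hw => (continuous_subtype_val.continuousAt.comp
    (AddCircle.continuousAt_equivIoc 1 z fun h => hz (h ▸ hw))).continuousWithinAt).ordConnected

open Classical in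
lemma card_filter_mem_image_le_three {φ : AddCircle (1 : ℝ) → ℝ} (hφ : Function.Injective φ)
    {n : ℕ} (S : Finset ℕ) (hS : ∀ a ∈ S, a < 2 ^ n) (r : ℝ) :
    (S.filter fun a => r ∈ φ '' dyadicArc n a).card ≤ 3 := by
  by_cases hr : ∃ w, φ w = r
  · obtain ⟨w, rfl⟩ := hr
    exact card_le_three_of_mem_dyadicArc _ (fun a ha => hS a (Finset.mem_filter.1 ha).1)
      fun a ha => hφ.mem_set_image.1 (Finset.mem_filter.1 ha).2
  · push Not at hr
    simp [hr]

/-- Cutting the circle open at a gap point of one arc turns `U` into an interval; every other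
arc with a gap contains one of its two ends, and each end lies on at most three arcs. -/
lemma card_le_seven_of_forall_gap {U : Set (AddCircle (1 : ℝ))} (hU : IsPreconnected U)
    {n : ℕ} (S : Finset ℕ) (hS : ∀ a ∈ S, a < 2 ^ n)
    (hmeet : ∀ a ∈ S, (dyadicArc n a ∩ U).Nonempty)
    (hgap : ∀ a ∈ S, ∃ z ∈ dyadicIoo n a, z ∉ dyadicRats ∧ (z : AddCircle (1 : ℝ)) ∉ U) :
    S.card ≤ 7 := by
  classical
  rcases S.eq_empty_or_nonempty with rfl | ⟨a₁, ha₁⟩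
  · simp
  obtain ⟨z₁, hz₁, hz₁d, hz₁U⟩ := hgap a₁ ha₁
  set φ : AddCircle (1 : ℝ) → ℝ := fun w => AddCircle.equivIoc 1 z₁ w
  have hφ : Function.Injective φ := fun _ _ h => (AddCircle.equivIoc 1 z₁).injective
    (Subtype.ext h)
  have hends : ∀ a ∈ S, a ≠ a₁ →
      sInf (φ '' U) ∈ φ '' dyadicArc n a ∨ sSup (φ '' U) ∈ φ '' dyadicArc n a := by
    intro a ha hne
    obtain ⟨u, huA, huU⟩ := hmeet a ha
    obtain ⟨z, hz, -, hzU⟩ := hgap a ha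
    have hzA : (z : AddCircle (1 : ℝ)) ∈ dyadicArc n a := ⟨z, Ioo_subset_Icc_self hz, rfl⟩
    exact (ordConnected_image_equivIoc hU hz₁U).csInf_mem_or_csSup_mem
      (ordConnected_image_equivIoc (isConnected_dyadicArc n a).isPreconnected
        (coe_not_mem_dyadicArc (hS a₁ ha₁) (hS a ha) hne hz₁ hz₁d))
      (mem_image_of_mem φ huU) (mem_image_of_mem φ huA) (mem_image_of_mem φ hzA)
      (hφ.mem_set_image.not.2 hzU)
  calc S.card ≤ (insert a₁ ((S.filter fun a => sInf (φ '' U) ∈ φ '' dyadicArc n a) ∪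
        S.filter fun a => sSup (φ '' U) ∈ φ '' dyadicArc n a)).card := by
        refine Finset.card_le_card fun a ha => ?_
        by_cases hne : a = a₁
        · exact hne ▸ Finset.mem_insert_self _ _
        · simpa [ha, hne] using hends a ha hne
    _ ≤ _ + 1 := Finset.card_insert_le _ _
    _ ≤ 3 + 3 + 1 := by
        grw [Finset.card_union_le, card_filter_mem_image_le_three hφ S hS,
          card_filter_mem_image_le_three hφ S hS]
    _ = 7 := rfl


lemma IsConnected.iUnion_of_subset_of_meets {X ι : Type*} [TopologicalSpace X] {U : Set X}
    (hU : IsConnected U) {s : ι → Set X} (hs : ∀ i, IsConnected (s i))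
    (hmeet : ∀ i, (s i ∩ U).Nonempty) (hsub : U ⊆ ⋃ i, s i) : IsConnected (⋃ i, s i) := by
  obtain ⟨x, hx⟩ := hU.nonempty
  obtain ⟨i₀, -⟩ := mem_iUnion.1 (hsub hx)
  have : Nonempty ι := ⟨i₀⟩
  rw [← union_eq_left.2 hsub, iUnion_union]
  exact ⟨⟨x, mem_iUnion.2 ⟨i₀, Or.inr hx⟩⟩, isPreconnected_iUnion
    ⟨x, mem_iInter.2 fun i => Or.inr hx⟩ fun i => ((hs i).union (hmeet i) hU).isPreconnected⟩

section Surgery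

variable {Δ : ℕ → ℕ → ℝ} {n N : ℕ} {c : Fin (N + 1) → ℕ × ℕ}

def ancestor (n : ℕ) (p : ℕ × ℕ) : ℕ := p.2 / 2 ^ (p.1 - n)

def deepArcs (n : ℕ) (c : Fin (N + 1) → ℕ × ℕ) : Finset (Fin (N + 1)) :=
  Finset.univ.filter fun k => n < (c k).1

open Classical in
def freeAncestors (n : ℕ) (c : Fin (N + 1) → ℕ × ℕ) : Finset ℕ :=
  ((deepArcs n c).image fun k => ancestor n (c k)).filter
    fun a => ∀ k, (c k).1 ≤ n → ¬ dyadicArc n a ⊆ dyadicArc (c k).1 (c k).2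

lemma exists_subset_of_mem_freeAncestors {a : ℕ} (ha : a ∈ freeAncestors n c) :
    ∃ k, n < (c k).1 ∧ ancestor n (c k) = a ∧ dyadicArc (c k).1 (c k).2 ⊆ dyadicArc n a := by
  classical
  obtain ⟨k, hk, rfl⟩ := Finset.mem_image.1 (Finset.mem_filter.1 ha).1
  have hk : n < (c k).1 := (Finset.mem_filter.1 hk).2
  exact ⟨k, hk, rfl, dyadicArc_subset_ancestor hk.le _⟩

lemma lt_of_mem_freeAncestors (hc : ∀ k, (c k).2 < 2 ^ (c k).1) {a : ℕ}
    (ha : a ∈ freeAncestors n c) : a < 2 ^ n := by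
  obtain ⟨k, hk, rfl, -⟩ := exists_subset_of_mem_freeAncestors ha
  exact ancestor_lt hk.le (hc k)

lemma meets_of_mem_freeAncestors {a : ℕ} (ha : a ∈ freeAncestors n c) :
    (dyadicArc n a ∩ ⋃ k, dyadicArc (c k).1 (c k).2).Nonempty := by
  obtain ⟨k, -, -, hsub⟩ := exists_subset_of_mem_freeAncestors ha
  obtain ⟨w, hw⟩ := (isConnected_dyadicArc (c k).1 (c k).2).nonempty
  exact ⟨w, hsub hw, mem_iUnion.2 ⟨k, hw⟩⟩

lemma subset_shallow_or_subset_freeAncestor (k : Fin (N + 1)) :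
    (∃ k', (c k').1 ≤ n ∧ dyadicArc (c k).1 (c k).2 ⊆ dyadicArc (c k').1 (c k').2) ∨
      ∃ a ∈ freeAncestors n c, dyadicArc (c k).1 (c k).2 ⊆ dyadicArc n a := by
  classical
  rcases le_or_gt (c k).1 n with hk | hk
  · exact Or.inl ⟨k, hk, subset_rfl⟩
  have hanc := dyadicArc_subset_ancestor hk.le (c k).2
  by_cases ha : ancestor n (c k) ∈ freeAncestors n c
  · exact Or.inr ⟨_, ha, hanc⟩
  · have hk' : k ∈ deepArcs n c := Finset.mem_filter.2 ⟨Finset.mem_univ k, hk⟩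
    obtain ⟨k', hk', hsub⟩ : ∃ k', (c k').1 ≤ n ∧
        dyadicArc n (ancestor n (c k)) ⊆ dyadicArc (c k').1 (c k').2 := by
      simpa [freeAncestors, Finset.mem_image_of_mem _ hk'] using ha
    exact Or.inl ⟨k', hk', hanc.trans hsub⟩

lemma dOf_le_sum_shallow_add_sum_freeAncestors (hΔ : IsS1 Δ) {x y : AddCircle (1 : ℝ)}
    (hc : IsDyadicChain N c x y) :
    dOf Δ x y ≤ ∑ k with (c k).1 ≤ n, trunc Δ n (c k).1 (c k).2 +
      ∑ a ∈ freeAncestors n c, Δ n a := by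
  set c' : {k // (c k).1 ≤ n} ⊕ freeAncestors n c → ℕ × ℕ := Sum.elim (fun k => c k) (n, ·)
  set U := ⋃ k, dyadicArc (c k).1 (c k).2
  have hsub : U ⊆ ⋃ i, dyadicArc (c' i).1 (c' i).2 := by
    refine iUnion_subset fun k => ?_
    rcases subset_shallow_or_subset_freeAncestor k with ⟨k', hk', hsub⟩ | ⟨a, ha, hsub⟩
    · exact hsub.trans (subset_iUnion_of_subset (Sum.inl ⟨k', hk'⟩) subset_rfl)
    · exact hsub.trans (subset_iUnion_of_subset (Sum.inr ⟨a, ha⟩) subset_rfl)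
  have hmeet : ∀ i, (dyadicArc (c' i).1 (c' i).2 ∩ U).Nonempty := by
    rintro (⟨k, -⟩ | ⟨a, ha⟩)
    · obtain ⟨w, hw⟩ := (isConnected_dyadicArc (c k).1 (c k).2).nonempty
      exact ⟨w, hw, mem_iUnion.2 ⟨k, hw⟩⟩
    · exact meets_of_mem_freeAncestors ha
  have h := dOf_le_sum (fun _ _ => hΔ.nonneg) c'
    (Sum.forall.2 ⟨fun k => hc.1 k, fun a => lt_of_mem_freeAncestors hc.1 a.2⟩)
    (hc.2.1.iUnion_of_subset_of_meets (fun i => isConnected_dyadicArc _ _) hmeet hsub)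
    (hsub hc.2.2.1) (hsub hc.2.2.2)
  rw [Fintype.sum_sum_type] at h
  convert h using 2
  · rw [Finset.sum_subtype (p := fun k => (c k).1 ≤ n) _ fun k => by simp]
    exact Finset.sum_congr rfl fun k _ => trunc_of_le k.2 _
  · exact (Finset.sum_coe_sort _ _).symm

lemma sum_one_div_two_pow_lt_of_sum_trunc_lt (hΔ : IsS1 Δ) {a : ℕ} (ha : a < 2 ^ n)
    (hlt : ∑ k ∈ deepArcs n c with ancestor n (c k) = a, trunc Δ n (c k).1 (c k).2 < Δ n a) :
    ∑ k ∈ deepArcs n c with ancestor n (c k) = a, (1 : ℝ) / 2 ^ (c k).1 < 1 / 2 ^ n := by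
  have hterm : ∀ k ∈ (deepArcs n c).filter fun k => ancestor n (c k) = a,
      trunc Δ n (c k).1 (c k).2 = Δ n a * 2 ^ n * (1 / 2 ^ (c k).1) := by
    intro k hk
    obtain ⟨hkD, hka⟩ := Finset.mem_filter.1 hk
    have hdeep : n < (c k).1 := (Finset.mem_filter.1 hkD).2
    have hpow : (2 : ℝ) ^ (c k).1 = 2 ^ n * 2 ^ ((c k).1 - n) := by
      rw [← pow_add, Nat.add_sub_cancel' hdeep.le]
    rw [trunc_of_lt hdeep]
    change Δ n (ancestor n (c k)) / _ = _
    rw [hka, hpow]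
    field_simp
  rw [Finset.sum_congr rfl hterm, ← Finset.mul_sum] at hlt
  have hΔa := hΔ.2.1 n a ha
  by_contra! hge
  rw [div_le_iff₀' (by positivity)] at hge
  nlinarith

/-- The deep arcs below `a` are too short to cover it, so they miss a non-dyadic point of it;
that point lies on no coarse arc of the chain either, as `a` is free. -/
lemma exists_gap_of_mem_freeAncestors (hΔ : IsS1 Δ) (hc : ∀ k, (c k).2 < 2 ^ (c k).1) {a : ℕ}
    (ha : a ∈ freeAncestors n c)
    (hlt : ∑ k ∈ deepArcs n c with ancestor n (c k) = a, trunc Δ n (c k).1 (c k).2 < Δ n a) :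
    ∃ z ∈ dyadicIoo n a, z ∉ dyadicRats ∧
      (z : AddCircle (1 : ℝ)) ∉ ⋃ k, dyadicArc (c k).1 (c k).2 := by
  classical
  have han := lt_of_mem_freeAncestors hc ha
  obtain ⟨z, hz, hzd, hzT⟩ :=
    exists_mem_dyadicIoo_forall_not_mem _ (fun k => (c k).1) (fun k => (c k).2) a
      (sum_one_div_two_pow_lt_of_sum_trunc_lt hΔ han hlt)
  refine ⟨z, hz, hzd, fun hzU => ?_⟩
  obtain ⟨k, hk⟩ := mem_iUnion.1 hzU
  have hzk := (coe_mem_dyadicArc_iff (mem_Ioo_of_mem_dyadicIoo han hz) (hc k)).1 hk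
  rcases lt_or_ge n (c k).1 with hdeep | hshallow
  · refine hzT k (Finset.mem_filter.2 ⟨Finset.mem_filter.2 ⟨Finset.mem_univ k, hdeep⟩, ?_⟩) hzk
    exact eq_of_mem_dyadicIoo (mem_dyadicIoo_of_not_mem_dyadicRats
      (dyadicIcc_subset_ancestor hdeep.le _ hzk) hzd) hz
  · have he : a / 2 ^ (n - (c k).1) = (c k).2 := eq_of_mem_dyadicIoo
      (mem_dyadicIoo_of_not_mem_dyadicRats
        (dyadicIcc_subset_ancestor hshallow a (Ioo_subset_Icc_self hz)) hzd)
      (mem_dyadicIoo_of_not_mem_dyadicRats hzk hzd)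
    exact (Finset.mem_filter.1 ha).2 k hshallow (he ▸ dyadicArc_subset_ancestor hshallow a)

lemma sum_freeAncestors_le (hΔ : IsS1 Δ) {x y : AddCircle (1 : ℝ)} (hc : IsDyadicChain N c x y)
    {B : ℝ} (hB : ∀ i < 2 ^ n, Δ n i ≤ B) :
    ∑ a ∈ freeAncestors n c, Δ n a ≤ ∑ k ∈ deepArcs n c, trunc Δ n (c k).1 (c k).2 + 7 * B := by
  set w : ℕ → ℝ := fun a =>
    ∑ k ∈ deepArcs n c with ancestor n (c k) = a, trunc Δ n (c k).1 (c k).2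
  rw [← Finset.sum_filter_add_sum_filter_not _ fun a => Δ n a ≤ w a]
  gcongr ?_ + ?_
  · calc ∑ a ∈ freeAncestors n c with Δ n a ≤ w a, Δ n a
        ≤ ∑ a ∈ freeAncestors n c with Δ n a ≤ w a, w a :=
          Finset.sum_le_sum fun a ha => (Finset.mem_filter.1 ha).2
      _ = ∑ k ∈ deepArcs n c with ancestor n (c k) ∈ (freeAncestors n c).filter
            (fun a => Δ n a ≤ w a), trunc Δ n (c k).1 (c k).2 :=
          Finset.sum_fiberwise_eq_sum_filter _ _ _ _
      _ ≤ _ := Finset.sum_le_sum_of_subset_of_nonneg (Finset.filter_subset _ _)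
          fun k _ _ => hΔ.trunc_nonneg n (hc.1 k)
  · have hbad := card_le_seven_of_forall_gap hc.2.1.isPreconnected
      ((freeAncestors n c).filter fun a => ¬ Δ n a ≤ w a)
      (fun a ha => lt_of_mem_freeAncestors hc.1 (Finset.mem_filter.1 ha).1)
      (fun a ha => meets_of_mem_freeAncestors (Finset.mem_filter.1 ha).1)
      fun a ha => exists_gap_of_mem_freeAncestors hΔ hc.1 (Finset.mem_filter.1 ha).1
        (not_le.1 (Finset.mem_filter.1 ha).2)
    have hB₀ : 0 ≤ B := (hΔ.nonneg (Nat.two_pow_pos n)).trans (hB 0 (Nat.two_pow_pos n))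
    calc _ ≤ _ • B := Finset.sum_le_card_nsmul _ _ _ fun a ha =>
          hB a (lt_of_mem_freeAncestors hc.1 (Finset.mem_filter.1 ha).1)
      _ ≤ 7 * B := by rw [nsmul_eq_mul]; gcongr; exact_mod_cast hbad

lemma dOf_le_dOf_trunc_add (hΔ : IsS1 Δ) {B : ℝ} (hB : ∀ i < 2 ^ n, Δ n i ≤ B)
    (x y : AddCircle (1 : ℝ)) : dOf Δ x y ≤ dOf (trunc Δ n) x y + 7 * B := by
  rw [← sub_le_iff_le_add]
  refine le_csInf (chainSums_nonempty x y) ?_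
  rintro _ ⟨N, c, hc, rfl⟩
  rw [sub_le_iff_le_add]
  calc dOf Δ x y ≤ ∑ k with (c k).1 ≤ n, trunc Δ n (c k).1 (c k).2 +
        ∑ a ∈ freeAncestors n c, Δ n a := dOf_le_sum_shallow_add_sum_freeAncestors hΔ hc
    _ ≤ ∑ k with (c k).1 ≤ n, trunc Δ n (c k).1 (c k).2 +
        (∑ k ∈ deepArcs n c, trunc Δ n (c k).1 (c k).2 + 7 * B) := by
        gcongr; exact sum_freeAncestors_le hΔ hc hB
    _ = ∑ k, trunc Δ n (c k).1 (c k).2 + 7 * B := by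
        have := Finset.sum_filter_add_sum_filter_not Finset.univ (fun k => n < (c k).1)
          fun k => trunc Δ n (c k).1 (c k).2
        simp only [not_lt] at this
        rw [deepArcs]
        linarith

end Surgery

section Diameter

variable {α : Type*} {d : α → α → ℝ} {S : Set α}

lemma le_ddiam {C : ℝ} (hC : ∀ x y, d x y ≤ C) {x y : α} (hx : x ∈ S) (hy : y ∈ S) :
    d x y ≤ ddiam d S :=
  le_csSup ⟨C, by rintro _ ⟨x, -, y, -, rfl⟩; exact hC x y⟩ ⟨x, hx, y, hy, rfl⟩

lemma ddiam_nonneg (hd : ∀ x y, 0 ≤ d x y) : 0 ≤ ddiam d S :=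
  Real.sSup_nonneg (by rintro _ ⟨x, -, y, -, rfl⟩; exact hd x y)

lemma ddiam_le {r : ℝ} (hr : 0 ≤ r) (h : ∀ x ∈ S, ∀ y ∈ S, d x y ≤ r) : ddiam d S ≤ r :=
  Real.sSup_le (by rintro _ ⟨x, hx, y, hy, rfl⟩; exact h x hx y hy) hr

end Diameter

lemma IsLimitMap.dOf_le_dOf_trunc_apply_add {Δ : ℕ → ℕ → ℝ} (hΔ : IsS1 Δ) {n : ℕ}
    {Fn : AddCircle (1 : ℝ) → AddCircle (1 : ℝ)} (hF : IsLimitMap Δ n Fn) {B : ℝ}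
    (hB : ∀ i < 2 ^ n, Δ n i ≤ B) (x y : AddCircle (1 : ℝ)) :
    dOf Δ x y ≤ dOf (trunc Δ n) (Fn x) (Fn y) + 13 * B := by
  have hnn : ∀ m i, i < 2 ^ m → 0 ≤ trunc Δ n m i := fun _ _ => hΔ.trunc_nonneg n
  calc dOf Δ x y ≤ dOf (trunc Δ n) x y + 7 * B := dOf_le_dOf_trunc_add hΔ hB x y
    _ ≤ dOf (trunc Δ n) x (Fn x) + (dOf (trunc Δ n) (Fn x) (Fn y) +
          dOf (trunc Δ n) (Fn y) y) + 7 * B := by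
        grw [dOf_triangle hnn x (Fn x) y, dOf_triangle hnn (Fn x) (Fn y) y]
    _ ≤ 3 * B + (dOf (trunc Δ n) (Fn x) (Fn y) + 3 * B) + 7 * B := by
        grw [hF.dOf_trunc_self_le hΔ hB x, dOf_comm (Fn y) y, hF.dOf_trunc_self_le hΔ hB y]
    _ = dOf (trunc Δ n) (Fn x) (Fn y) + 13 * B := by ring

theorem ddiam_W_le_ddiam_V_add_delta_general
    (Δ : ℕ → ℕ → ℝ) (hΔ : IsS1 Δ)
    (F : ℕ → AddCircle (1 : ℝ) → AddCircle (1 : ℝ)) (hF : ∀ m : ℕ, IsLimitMap Δ m (F m))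
    (δ : ℝ) (M : ℕ)
    (hδ₁ : 1 / 2 ^ (M + 1) ≤ δ) (H : Set (AddCircle (1 : ℝ)))
    (W : Set (AddCircle (1 : ℝ)))
    (V : ℕ → Set (AddCircle (1 : ℝ)))
    (hV : ∀ n : ℕ, DComp (dOf (trunc Δ (n + 1))) δ (Fchain Δ 0 n ⁻¹' H) (V (n + 1)) ∧
      F (n + 1) '' W ⊆ V (n + 1))
    :
    ∃ Nstar : ℕ, ∀ n ≥ Nstar, ddiam (dOf Δ) W ≤ ddiam (dOf (trunc Δ n)) (V n) + δ := by
  have hδ : 0 < δ := lt_of_lt_of_le (by positivity) hδ₁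
  obtain ⟨N₀, hN₀⟩ := hΔ.2.2.2 (δ / 13) (by positivity)
  refine ⟨N₀ + 1, fun n hn => ?_⟩
  obtain ⟨m, rfl⟩ : ∃ m, n = m + 1 := ⟨n - 1, by omega⟩
  have hB : ∀ i < 2 ^ (m + 1), Δ (m + 1) i ≤ δ / 13 := fun i hi => (hN₀ _ (by omega) i hi).le
  have hnn : ∀ k i, i < 2 ^ k → 0 ≤ trunc Δ (m + 1) k i := fun _ _ => hΔ.trunc_nonneg _
  refine ddiam_le (by linarith [ddiam_nonneg (S := V (m + 1)) (dOf_nonneg hnn)])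
    fun x hx y hy => ?_
  have hFxy := le_ddiam (dOf_le_weight_zero_zero hnn) ((hV m).2 (mem_image_of_mem _ hx))
    ((hV m).2 (mem_image_of_mem _ hy))
  linarith [(hF (m + 1)).dOf_le_dOf_trunc_apply_add hΔ hB x y]

/-- There exists `N*` such that for all `n ≥ N*`, `diam_Δ(W) ≤ diam_n(V_n) + δ`. -/
theorem ddiam_W_le_ddiam_V_add_delta
    (Δ : ℕ → ℕ → ℝ) (hΔ : IsS1 Δ)
    (F : ℕ → AddCircle (1 : ℝ) → AddCircle (1 : ℝ)) (hF : ∀ m : ℕ, IsLimitMap Δ m (F m))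
    (δ : ℝ) (M : ℕ) (hM : 3 ≤ M)
    (hδ₁ : 1 / 2 ^ (M + 1) ≤ δ) (hδ₂ : δ < 1 / 2 ^ M)
    (j : ℕ) (hj : j < 2 ^ M) (H : Set (AddCircle (1 : ℝ)))
    (hH : H = dyadicArc M j ∪ dyadicArc M ((j + 1) % 2 ^ M))
    (W : Set (AddCircle (1 : ℝ))) (hW : DComp (dOf Δ) δ (F 0 ⁻¹' H) W)
    (V : ℕ → Set (AddCircle (1 : ℝ))) (hV0 : V 0 = H)
    (hV : ∀ n : ℕ, DComp (dOf (trunc Δ (n + 1))) δ (Fchain Δ 0 n ⁻¹' H) (V (n + 1)) ∧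
      F (n + 1) '' W ⊆ V (n + 1))
    :
    ∃ Nstar : ℕ, ∀ n ≥ Nstar, ddiam (dOf Δ) W ≤ ddiam (dOf (trunc Δ n)) (V n) + δ :=
  ddiam_W_le_ddiam_V_add_delta_general Δ hΔ F hF δ M hδ₁ H W V hV
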